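/- There exist δ₀ > 0 and constants 0 < c ≤ C such that for x ∈ (γ₀-δ₀, γ₀+δ₀): c·|x-γ₀| ≤ |π(x) - γ₀| ≤ C·|x-γ₀| and c·|x-γ₀|² ≤ |λ''(x) + λ''(π(x))| ≤ C·|x-γ₀|², where π is the reflection map satisfying λ'(x) = λ'(π(x)), π(γ₀) = γ₀, λ(x) = x·√((2+x²)/(1+x²)), γ₀ = √(1+√7). -/

import Mathlib

open Real Filter Set Topology

noncomputable def lam (x : ℝ) : ℝ := x * Real.sqrt ((2 + x ^ 2) / (1 + x ^ 2))

noncomputable def gamma0 : ℝ := Real.sqrt (1 + Real.sqrt 7)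

noncomputable def s7 : ℝ := Real.sqrt 7
noncomputable def uu : ℝ := 1 + s7
noncomputable def Nf (u : ℝ) : ℝ := u^2 + 2*u + 2
noncomputable def Dfp (u : ℝ) : ℝ := (1+u)^3 * (2+u)
noncomputable def SD (u : ℝ) : ℝ := Real.sqrt (Dfp u)
noncomputable def dd : ℝ := SD uu
noncomputable def n0 : ℝ := Nf uu
noncomputable def rf (u : ℝ) : ℝ := (27+11*s7)*u^2 + (60+24*s7)*u + (46+18*s7)
noncomputable def Ef (u : ℝ) : ℝ := SD u * dd * (Nf u * dd + n0 * SD u)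
noncomputable def Wf (u : ℝ) : ℝ := rf u / Ef u
noncomputable def Zf (u : ℝ) : ℝ := (u - uu) * Real.sqrt (Wf u)
noncomputable def A1 (x : ℝ) : ℝ := Nf (x^2) / SD (x^2)

lemma hs7 : s7^2 = 7 := Real.sq_sqrt (by norm_num)
lemma s7pos : 0 < s7 := Real.sqrt_pos.mpr (by norm_num)
lemma s7lb : 2.645 < s7 := by
  nlinarith [hs7, s7pos]
lemma s7ub : s7 < 2.646 := by
  nlinarith [hs7, s7pos]
lemma uupos : 0 < uu := by unfold uu; nlinarith [s7lb]
lemma gamma0_eq : gamma0 = Real.sqrt uu := rfl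
lemma gamma0_sq : gamma0^2 = uu := Real.sq_sqrt (le_of_lt uupos)
lemma gamma0_pos : 0 < gamma0 := Real.sqrt_pos.mpr uupos

lemma Dfp_pos {u : ℝ} (hu : 0 ≤ u) : 0 < Dfp u := by unfold Dfp; positivity
lemma SD_pos {u : ℝ} (hu : 0 ≤ u) : 0 < SD u := Real.sqrt_pos.mpr (Dfp_pos hu)
lemma SD_sq {u : ℝ} (hu : 0 ≤ u) : SD u ^ 2 = Dfp u := Real.sq_sqrt (le_of_lt (Dfp_pos hu))
lemma dd_pos : 0 < dd := SD_pos (le_of_lt uupos)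
lemma dd_sq : dd^2 = Dfp uu := SD_sq (le_of_lt uupos)
lemma Nf_pos {u : ℝ} (hu : 0 ≤ u) : 0 < Nf u := by unfold Nf; nlinarith
lemma n0_pos : 0 < n0 := Nf_pos (le_of_lt uupos)
lemma Ef_pos {u : ℝ} (hu : 0 ≤ u) : 0 < Ef u := by
  unfold Ef
  have h1 := SD_pos hu; have h2 := dd_pos; have h3 := Nf_pos hu; have h4 := n0_pos
  positivity

/-- key polynomial identity -/
lemma key_ident (u : ℝ) :
    Nf u ^ 2 * Dfp uu - n0 ^ 2 * Dfp u = (u - uu)^2 * rf u := by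
  unfold Nf Dfp n0 Nf rf uu
  linear_combination ((2*s7+2*s7^2) + u*(-7-8*s7+s7^2) + u^2*(-2-11*s7-s7^2) +
    u^3*(5-4*s7-s7^2) + u^4*(4+s7)) * hs7

/-- derivative of lam -/
lemma lam_hasDeriv (x : ℝ) : HasDerivAt lam (A1 x) x := by
  have h1 : (0:ℝ) < 1 + x^2 := by positivity
  have h2 : (0:ℝ) < 2 + x^2 := by positivity
  have hinner : HasDerivAt (fun x : ℝ => (2 + x^2)/(1 + x^2)) (-2*x/(1+x^2)^2) x := by
    have h := (HasDerivAt.const_add 2 ((hasDerivAt_pow 2 x))).div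
      (HasDerivAt.const_add 1 ((hasDerivAt_pow 2 x))) (ne_of_gt h1)
    refine h.congr_deriv ?_
    field_simp
    ring
  have hipos : (0:ℝ) < (2 + x^2)/(1 + x^2) := by positivity
  have hsq : HasDerivAt (fun x : ℝ => Real.sqrt ((2 + x^2)/(1 + x^2)))
      (-2*x/(1+x^2)^2 / (2 * Real.sqrt ((2+x^2)/(1+x^2)))) x := by
    have h := (Real.hasDerivAt_sqrt (ne_of_gt hipos)).comp x hinner
    refine h.congr_deriv ?_
    ring
  have hl : HasDerivAt lam
      (1 * Real.sqrt ((2+x^2)/(1+x^2)) + x * (-2*x/(1+x^2)^2 / (2 * Real.sqrt ((2+x^2)/(1+x^2))))) x :=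
    (hasDerivAt_id x).mul hsq
  convert hl using 1
  set a := Real.sqrt (1+x^2) with ha
  set b := Real.sqrt (2+x^2) with hb
  have ha2 : a^2 = 1+x^2 := Real.sq_sqrt (le_of_lt h1)
  have hb2 : b^2 = 2+x^2 := Real.sq_sqrt (le_of_lt h2)
  have hap : 0 < a := Real.sqrt_pos.mpr h1
  have hbp : 0 < b := Real.sqrt_pos.mpr h2
  have hsab : Real.sqrt ((2+x^2)/(1+x^2)) = b / a := by
    rw [Real.sqrt_div h2.le, ← ha, ← hb]
  have hSD : SD (x^2) = a^3 * b := by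
    have hsq2 : (a^3*b)^2 = Dfp (x^2) := by
      have h : (a^3*b)^2 = (a^2)^3*(b^2) := by ring
      rw [h, ha2, hb2]; unfold Dfp; ring
    rw [show SD (x^2) = Real.sqrt (Dfp (x^2)) from rfl, ← hsq2,
      Real.sqrt_sq (by positivity)]
  rw [hsab]
  unfold A1 Nf
  rw [hSD]
  have hane : a ≠ 0 := ne_of_gt hap
  have hbne : b ≠ 0 := ne_of_gt hbp
  have e3 : a^3*b^3 = (1+x^2)*(2+x^2)*(a*b) := by
    have h : a^3*b^3 = a^2*b^2*(a*b) := by ring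
    rw [h, ha2, hb2]
  have e5 : a^5*b = (1+x^2)^2*(a*b) := by
    have h : a^5*b = (a^2)^2*(a*b) := by ring
    rw [h, ha2]
  field_simp
  rw [ha2, hb2]; ring

lemma deriv_lam_eq : deriv lam = A1 := by
  funext x; exact (lam_hasDeriv x).deriv

/-- good open set in u -/
def GW : Set ℝ := {u | 0 < u ∧ 0 < rf u}

lemma GW_open : IsOpen GW := by
  have : GW = (fun u : ℝ => u) ⁻¹' (Ioi 0) ∩ rf ⁻¹' (Ioi 0) := by
    ext u; simp [GW, mem_setOf_eq]
  rw [this]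
  exact (isOpen_Ioi.preimage continuous_id).inter
    (isOpen_Ioi.preimage (by unfold rf; continuity))

lemma rf_uu : rf uu = 644 + 244*s7 := by
  unfold rf uu; linear_combination (73+11*s7)*hs7

lemma rf_uu_pos : 0 < rf uu := by
  rw [rf_uu]; nlinarith [s7pos]

lemma uu_mem_GW : uu ∈ GW := ⟨uupos, rf_uu_pos⟩

lemma Wf_pos {u : ℝ} (hu : u ∈ GW) : 0 < Wf u :=
  div_pos hu.2 (Ef_pos hu.1.le)

/-- Morse identity -/
lemma morse_ident {u : ℝ} (hu : 0 ≤ u) :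
    Nf u / SD u - n0 / dd = (u - uu)^2 * rf u / Ef u := by
  have hSD := SD_pos hu
  have hdd := dd_pos
  have hN := Nf_pos hu
  have hn0 := n0_pos
  have hplus : 0 < Nf u * dd + n0 * SD u := by positivity
  have h1 : (Nf u * dd - n0 * SD u) * (Nf u * dd + n0 * SD u) = (u - uu)^2 * rf u := by
    have expand : (Nf u * dd - n0 * SD u) * (Nf u * dd + n0 * SD u)
        = Nf u^2 * dd^2 - n0^2 * SD u^2 := by ring
    rw [expand, dd_sq, SD_sq hu]
    exact key_ident u
  have h2 : Nf u / SD u - n0 / dd = (Nf u * dd - n0 * SD u) / (SD u * dd) := by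
    field_simp
  rw [h2]
  rw [eq_div_iff (ne_of_gt (Ef_pos hu))]
  unfold Ef
  field_simp
  linear_combination h1

lemma contDiff_Dfp : ContDiff ℝ (⊤ : ℕ∞) Dfp := by unfold Dfp; fun_prop
lemma contDiff_Nf : ContDiff ℝ (⊤ : ℕ∞) Nf := by unfold Nf; fun_prop
lemma contDiff_rf : ContDiff ℝ (⊤ : ℕ∞) rf := by unfold rf; fun_prop

lemma SD_contDiffAt {u : ℝ} (hu : 0 ≤ u) : ContDiffAt ℝ (⊤ : ℕ∞) SD u := by
  exact (Real.contDiffAt_sqrt (ne_of_gt (Dfp_pos hu))).comp u contDiff_Dfp.contDiffAt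

lemma Ef_contDiffAt {u : ℝ} (hu : 0 ≤ u) : ContDiffAt ℝ (⊤ : ℕ∞) Ef u := by
  unfold Ef
  exact ((SD_contDiffAt hu).mul contDiffAt_const).mul
    ((contDiff_Nf.contDiffAt.mul contDiffAt_const).add
      (contDiffAt_const.mul (SD_contDiffAt hu)))

lemma Wf_contDiffAt {u : ℝ} (hu : u ∈ GW) : ContDiffAt ℝ (⊤ : ℕ∞) Wf u := by
  unfold Wf
  exact contDiff_rf.contDiffAt.div (Ef_contDiffAt hu.1.le) (ne_of_gt (Ef_pos hu.1.le))

lemma sqrtWf_contDiffAt {u : ℝ} (hu : u ∈ GW) :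
    ContDiffAt ℝ (⊤ : ℕ∞) (fun v => Real.sqrt (Wf v)) u :=
  (Real.contDiffAt_sqrt (ne_of_gt (Wf_pos hu))).comp u (Wf_contDiffAt hu)

lemma Zf_contDiffAt {u : ℝ} (hu : u ∈ GW) : ContDiffAt ℝ (⊤ : ℕ∞) Zf u := by
  unfold Zf
  exact (contDiffAt_id.sub contDiffAt_const).mul (sqrtWf_contDiffAt hu)

lemma Zf_contDiffOn : ContDiffOn ℝ (⊤ : ℕ∞) Zf GW :=
  fun u hu => (Zf_contDiffAt hu).contDiffWithinAt

noncomputable def dZ : ℝ → ℝ := deriv Zf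
noncomputable def dZ2 : ℝ → ℝ := deriv dZ

lemma dZ_contDiffOn : ContDiffOn ℝ (⊤ : ℕ∞) dZ GW :=
  Zf_contDiffOn.deriv_of_isOpen GW_open (by simp)

lemma dZ2_contDiffOn : ContDiffOn ℝ (⊤ : ℕ∞) dZ2 GW :=
  dZ_contDiffOn.deriv_of_isOpen GW_open (by simp)

lemma Zf_uu : Zf uu = 0 := by unfold Zf; simp

noncomputable def z0 : ℝ := Real.sqrt (Wf uu)

lemma z0_pos : 0 < z0 := Real.sqrt_pos.mpr (Wf_pos uu_mem_GW)
lemma z0_sq : z0^2 = Wf uu := Real.sq_sqrt (Wf_pos uu_mem_GW).le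

lemma Zf_hasDerivAt_uu : HasDerivAt Zf z0 uu := by
  have hdiff : DifferentiableAt ℝ (fun v => Real.sqrt (Wf v)) uu :=
    (sqrtWf_contDiffAt uu_mem_GW).differentiableAt (by simp)
  have h := ((hasDerivAt_id uu).sub_const uu).mul hdiff.hasDerivAt
  simp only [sub_self, zero_mul, one_mul, mul_zero] at h
  refine h.congr_deriv ?_
  simp [z0]
lemma dZ_uu : dZ uu = z0 := Zf_hasDerivAt_uu.deriv

lemma z0_ne : z0 ≠ 0 := ne_of_gt z0_pos

lemma Zf_strict : HasStrictDerivAt Zf z0 uu := by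
  have h := (Zf_contDiffAt uu_mem_GW).hasStrictDerivAt (by simp)
  rwa [show deriv Zf uu = z0 from dZ_uu] at h

noncomputable def Phi : OpenPartialHomeomorph ℝ ℝ :=
  (Zf_strict.hasStrictFDerivAt_equiv z0_ne).toOpenPartialHomeomorph Zf

lemma Phi_coe : (Phi : ℝ → ℝ) = Zf :=
  HasStrictFDerivAt.toOpenPartialHomeomorph_coe _

lemma Phi_source : uu ∈ Phi.source :=
  HasStrictFDerivAt.mem_toOpenPartialHomeomorph_source _

lemma Phi_target : (0:ℝ) ∈ Phi.target := by
  have h := HasStrictFDerivAt.image_mem_toOpenPartialHomeomorph_target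
    (Zf_strict.hasStrictFDerivAt_equiv z0_ne)
  rwa [Zf_uu] at h

lemma Phi_symm_zero : Phi.symm 0 = uu := by
  have h := Phi.left_inv Phi_source
  rw [Phi_coe, Zf_uu] at h
  exact h

noncomputable def psi : ℝ → ℝ := fun u => Phi.symm (-Zf u)

lemma psi_uu : psi uu = uu := by unfold psi; rw [Zf_uu, neg_zero, Phi_symm_zero]

lemma Zf_contAt : ContinuousAt Zf uu := (Zf_contDiffAt uu_mem_GW).continuousAt

lemma negZf_tendsto : Tendsto (fun u => -Zf u) (𝓝 uu) (𝓝 0) := by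
  have h := Zf_contAt.neg.tendsto
  rwa [Pi.neg_apply, Zf_uu, neg_zero] at h

lemma psi_contAt : ContinuousAt psi uu := by
  have h1 : ContinuousAt Phi.symm 0 := Phi.continuousAt_symm Phi_target
  exact h1.comp_of_eq (Zf_contAt.neg) (by rw [Zf_uu, neg_zero])

lemma ev_target : ∀ᶠ u in 𝓝 uu, -Zf u ∈ Phi.target :=
  negZf_tendsto.eventually (Phi.open_target.mem_nhds Phi_target)

lemma ev_flip : ∀ᶠ u in 𝓝 uu, Zf (psi u) = -Zf u := by
  filter_upwards [ev_target] with u hu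
  have h := Phi.right_inv hu
  rwa [Phi_coe] at h

lemma dZ_contAt : ContinuousAt dZ uu :=
  (Zf_contDiffOn.continuousOn_deriv_of_isOpen GW_open (by simp)).continuousAt
    (GW_open.mem_nhds uu_mem_GW)

lemma ev_dZ_ne : ∀ᶠ u in 𝓝 uu, dZ u ≠ 0 ∧ u ∈ GW := by
  have h1 : ∀ᶠ u in 𝓝 uu, dZ u ≠ 0 := by
    apply dZ_contAt.eventually_ne
    rw [dZ_uu]; exact z0_ne
  exact h1.and (GW_open.eventually_mem uu_mem_GW)

lemma ev_symm_smooth : ∀ᶠ y in 𝓝 (0:ℝ), ContDiffAt ℝ (⊤ : ℕ∞) Phi.symm y := by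
  have hsymm_cont : ContinuousAt Phi.symm 0 := Phi.continuousAt_symm Phi_target
  have h1 : ∀ᶠ y in 𝓝 (0:ℝ), dZ (Phi.symm y) ≠ 0 ∧ Phi.symm y ∈ GW := by
    have := hsymm_cont.tendsto
    rw [Phi_symm_zero] at this
    exact this.eventually ev_dZ_ne
  have h2 : ∀ᶠ y in 𝓝 (0:ℝ), y ∈ Phi.target :=
    Phi.open_target.eventually_mem Phi_target
  filter_upwards [h1, h2] with y hy1 hy2
  apply Phi.contDiffAt_symm_deriv hy1.1 hy2
  · rw [Phi_coe]
    exact ((Zf_contDiffAt hy1.2).differentiableAt (by simp)).hasDerivAt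
  · rw [Phi_coe]
    exact Zf_contDiffAt hy1.2

lemma ev_psi_smooth : ∀ᶠ u in 𝓝 uu, ContDiffAt ℝ (⊤ : ℕ∞) psi u := by
  have h1 : ∀ᶠ u in 𝓝 uu, ContDiffAt ℝ (⊤ : ℕ∞) Phi.symm (-Zf u) :=
    negZf_tendsto.eventually ev_symm_smooth
  filter_upwards [h1, GW_open.eventually_mem uu_mem_GW] with u hu hmem
  exact hu.comp u ((Zf_contDiffAt hmem).neg)

lemma psi_smoothAt : ContDiffAt ℝ (⊤ : ℕ∞) psi uu := ev_psi_smooth.self_of_nhds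

lemma psi_hasDerivAt : HasDerivAt psi (-1) uu := by
  have hdiff : DifferentiableAt ℝ psi uu := psi_smoothAt.differentiableAt (by simp)
  have hZpsi : HasDerivAt Zf z0 (psi uu) := by rw [psi_uu]; exact Zf_hasDerivAt_uu
  have hcomp : HasDerivAt (fun u => Zf (psi u)) (z0 * deriv psi uu) uu :=
    HasDerivAt.comp uu hZpsi hdiff.hasDerivAt
  have hrhs : HasDerivAt (fun u => -Zf u) (-z0) uu := Zf_hasDerivAt_uu.neg
  have hlhs : HasDerivAt (fun u => Zf (psi u)) (-z0) uu :=
    hrhs.congr_of_eventuallyEq ev_flip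
  have huniq : z0 * deriv psi uu = -z0 := hcomp.unique hlhs
  have : deriv psi uu = -1 := by
    have h2 : z0 * deriv psi uu = z0 * (-1) := by rw [huniq]; ring
    exact mul_left_cancel₀ z0_ne h2
  rw [← this]
  exact hdiff.hasDerivAt

noncomputable def pf : ℝ → ℝ := fun x => Real.sqrt (psi (x^2))

lemma sq_tendsto : Tendsto (fun x : ℝ => x^2) (𝓝 gamma0) (𝓝 uu) := by
  have h : ContinuousAt (fun x : ℝ => x^2) gamma0 := by fun_prop
  have := h.tendsto
  rwa [gamma0_sq] at this

lemma pf_gamma0 : pf gamma0 = gamma0 := by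
  unfold pf
  rw [gamma0_sq, psi_uu, gamma0_eq]

lemma ev_psi_pos : ∀ᶠ u in 𝓝 uu, 0 < psi u ∧ psi u ∈ GW := by
  have h : ∀ᶠ v in 𝓝 uu, 0 < v ∧ v ∈ GW := by
    have h1 : ∀ᶠ v in 𝓝 uu, (0:ℝ) < v := eventually_gt_nhds uupos
    exact h1.and (GW_open.eventually_mem uu_mem_GW)
  have hpsi : Tendsto psi (𝓝 uu) (𝓝 uu) := by
    have := psi_contAt.tendsto
    rwa [psi_uu] at this
  exact hpsi.eventually h

/-- all eventual facts along x near gamma0 -/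
lemma ev_x_facts : ∀ᶠ x in 𝓝 gamma0,
    0 < x ∧ x^2 ∈ GW ∧ 0 < psi (x^2) ∧ psi (x^2) ∈ GW ∧
    Zf (psi (x^2)) = -Zf (x^2) ∧ ContDiffAt ℝ (⊤ : ℕ∞) psi (x^2) ∧
    pf x ^ 2 = psi (x^2) := by
  have h1 : ∀ᶠ x in 𝓝 gamma0, (0:ℝ) < x := eventually_gt_nhds gamma0_pos
  have h2 := sq_tendsto.eventually (GW_open.eventually_mem uu_mem_GW)
  have h3 := sq_tendsto.eventually ev_psi_pos
  have h4 := sq_tendsto.eventually ev_flip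
  have h5 := sq_tendsto.eventually ev_psi_smooth
  filter_upwards [h1, h2, h3, h4, h5] with x hx1 hx2 hx3 hx4 hx5
  refine ⟨hx1, hx2, hx3.1, hx3.2, hx4, hx5, ?_⟩
  exact Real.sq_sqrt hx3.1.le

lemma ev_pf_smooth : ∀ᶠ x in 𝓝 gamma0, ContDiffAt ℝ (⊤ : ℕ∞) pf x := by
  filter_upwards [ev_x_facts] with x hx
  unfold pf
  have hsq : ContDiffAt ℝ (⊤ : ℕ∞) (fun x : ℝ => x^2) x := by fun_prop
  have h1 : ContDiffAt ℝ (⊤ : ℕ∞) (fun x : ℝ => psi (x^2)) x :=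
    ContDiffAt.comp (g := psi) (f := fun y : ℝ => y^2) x hx.2.2.2.2.2.1 hsq
  exact (Real.contDiffAt_sqrt (ne_of_gt hx.2.2.1)).comp x h1

lemma pf_hasDerivAt : HasDerivAt pf (-1) gamma0 := by
  have hsq : HasDerivAt (fun x : ℝ => x^2) (2*gamma0) gamma0 := by
    simpa using (hasDerivAt_pow 2 gamma0)
  have hpsi : HasDerivAt psi (-1) (gamma0^2) := by rw [gamma0_sq]; exact psi_hasDerivAt
  have hs : HasDerivAt Real.sqrt (1/(2*Real.sqrt uu)) (psi (gamma0^2)) := by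
    rw [gamma0_sq, psi_uu]
    exact Real.hasDerivAt_sqrt (ne_of_gt uupos)
  have h1 : HasDerivAt (fun x : ℝ => psi (x^2)) (-1 * (2*gamma0)) gamma0 :=
    HasDerivAt.comp (h₂ := psi) (h := fun y : ℝ => y^2) gamma0 hpsi hsq
  have hs' : HasDerivAt Real.sqrt (1/(2*Real.sqrt uu)) ((fun x : ℝ => psi (x^2)) gamma0) := hs
  have hcomp : HasDerivAt pf (1/(2*Real.sqrt uu) * (-1 * (2*gamma0))) gamma0 :=
    hs'.comp gamma0 h1
  convert hcomp using 1
  rw [← gamma0_eq]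
  field_simp [gamma0_pos.ne']

/-- A1 decomposition -/
lemma A1_decomp {u : ℝ} (h0 : 0 ≤ u) (h1 : 0 ≤ rf u) : Nf u / SD u = n0/dd + Zf u^2 := by
  have hm := morse_ident h0
  have hz : Zf u ^ 2 = (u - uu)^2 * rf u / Ef u := by
    unfold Zf
    rw [mul_pow, Real.sq_sqrt]
    · unfold Wf; field_simp
    · unfold Wf
      exact div_nonneg h1 (Ef_pos h0).le
  rw [hz, ← hm]; ring

lemma ev_deriv_lam_flip : ∀ᶠ x in 𝓝 gamma0, deriv lam (pf x) = deriv lam x := by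
  filter_upwards [ev_x_facts] with x hx
  obtain ⟨hx1, hx2, hx3, hx4, hx5, _, hx7⟩ := hx
  rw [deriv_lam_eq]
  show Nf ((pf x)^2) / SD ((pf x)^2) = Nf (x^2) / SD (x^2)
  rw [hx7, A1_decomp hx3.le hx4.2.le, A1_decomp (by positivity) hx2.2.le, hx5]
  ring

lemma it2_eq : iteratedDeriv 2 lam = deriv A1 := by
  rw [iteratedDeriv_succ, iteratedDeriv_one, deriv_lam_eq]

def OO : Set ℝ := {x | 0 < x ∧ x^2 ∈ GW}

lemma OO_open : IsOpen OO := by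
  have h : OO = (fun x : ℝ => x) ⁻¹' (Ioi 0) ∩ (fun x : ℝ => x^2) ⁻¹' GW := by
    ext x; simp [OO, mem_setOf_eq]
  rw [h]
  exact (isOpen_Ioi.preimage continuous_id).inter (GW_open.preimage (by fun_prop))

lemma gamma0_mem_OO : gamma0 ∈ OO := by
  refine ⟨gamma0_pos, ?_⟩
  rw [gamma0_sq]; exact uu_mem_GW

lemma dZ_hasDerivAt {u : ℝ} (hu : u ∈ GW) : HasDerivAt Zf (dZ u) u :=
  (((Zf_contDiffOn u hu).contDiffAt (GW_open.mem_nhds hu)).differentiableAt (by simp)).hasDerivAt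

lemma dZ2_hasDerivAt {u : ℝ} (hu : u ∈ GW) : HasDerivAt dZ (dZ2 u) u :=
  (((dZ_contDiffOn u hu).contDiffAt (GW_open.mem_nhds hu)).differentiableAt (by simp)).hasDerivAt

lemma deriv_A1_on_OO {y : ℝ} (hy : y ∈ OO) :
    deriv A1 y = 4*y*Zf (y^2)*dZ (y^2) := by
  have hev : A1 =ᶠ[𝓝 y] (fun x => n0/dd + Zf (x^2)^2) := by
    filter_upwards [OO_open.eventually_mem hy] with x hx
    exact A1_decomp (by positivity) hx.2.2.le
  rw [hev.deriv_eq]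
  have hsq : HasDerivAt (fun x : ℝ => x^2) (2*y) y := by
    simpa using (hasDerivAt_pow 2 y)
  have hZ : HasDerivAt Zf (dZ (y^2)) ((fun x : ℝ => x^2) y) := dZ_hasDerivAt hy.2
  have hcomp : HasDerivAt (fun x : ℝ => Zf (x^2)) (dZ (y^2) * (2*y)) y :=
    HasDerivAt.comp (h₂ := Zf) (h := fun x : ℝ => x^2) y hZ hsq
  have h : HasDerivAt (fun x => n0/dd + Zf (x^2)^2) (0 + 2*Zf (y^2)*(dZ (y^2)*(2*y))) y := by
    apply (hasDerivAt_const y (n0/dd)).add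
    have := hcomp.pow 2
    refine this.congr_deriv ?_
    push_cast
    ring
  rw [h.deriv]
  ring

noncomputable def kap : ℝ → ℝ := fun x => x * dZ (x^2) - pf x * dZ (psi (x^2))

lemma pf_contAt : ContinuousAt pf gamma0 :=
  (ev_pf_smooth.self_of_nhds).continuousAt

lemma ev_pf_mem_OO : ∀ᶠ x in 𝓝 gamma0, pf x ∈ OO := by
  have h := pf_contAt.tendsto
  rw [pf_gamma0] at h
  exact h.eventually (OO_open.eventually_mem gamma0_mem_OO)

lemma ev_H_eq : ∀ᶠ x in 𝓝 gamma0,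
    iteratedDeriv 2 lam x + iteratedDeriv 2 lam (pf x) = 4 * Zf (x^2) * kap x := by
  filter_upwards [ev_x_facts, ev_pf_mem_OO, OO_open.eventually_mem gamma0_mem_OO]
    with x hx hpfO hxO
  obtain ⟨hx1, hx2, hx3, hx4, hx5, _, hx7⟩ := hx
  rw [it2_eq, deriv_A1_on_OO hxO, deriv_A1_on_OO hpfO, hx7, hx5]
  unfold kap
  ring

noncomputable def rfp : ℝ := 2*(27+11*s7)*uu + (60+24*s7)
noncomputable def Dfppv : ℝ := (1+uu)^2*(4*uu+7)
noncomputable def Efd : ℝ := (Dfppv/(2*dd))*dd*(Nf uu*dd + n0*SD uu)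
  + SD uu*dd*((2*uu+2)*dd + n0*(Dfppv/(2*dd)))
noncomputable def wd : ℝ := (rfp * Ef uu - rf uu * Efd)/(Ef uu)^2

lemma SD_uu_eq : SD uu = dd := rfl

lemma rf_hasDerivAt : HasDerivAt rf rfp uu := by
  unfold rf rfp
  have h1 : HasDerivAt (fun u : ℝ => (27+11*s7)*u^2 + (60+24*s7)*u + (46+18*s7))
      ((27+11*s7)*(2*uu) + ((60+24*s7)*1 + 0)) uu := by
    exact (((hasDerivAt_pow 2 uu).const_mul (27+11*s7)).add
      (((hasDerivAt_id uu).const_mul (60+24*s7)))).add_const (46+18*s7) |>.congr_deriv (by push_cast; ring)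
  exact h1.congr_deriv (by ring)

lemma Dfp_hasDerivAt : HasDerivAt Dfp Dfppv uu := by
  unfold Dfp Dfppv
  have h1 : HasDerivAt (fun u : ℝ => (1+u)^3*(2+u))
      ((3*(1+uu)^2*1)*(2+uu) + (1+uu)^3*1) uu := by
    have ha : HasDerivAt (fun u : ℝ => (1+u)^3) (3*(1+uu)^2*1) uu := by
      have h := ((hasDerivAt_id uu).const_add 1).pow 3
      refine h.congr_deriv ?_
      norm_num
    have hb : HasDerivAt (fun u : ℝ => (2+u)) 1 uu := (hasDerivAt_id uu).const_add 2
    exact ha.mul hb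
  exact h1.congr_deriv (by ring)

lemma Nf_hasDerivAt : HasDerivAt Nf (2*uu+2) uu := by
  unfold Nf
  have h1 : HasDerivAt (fun u : ℝ => u^2 + 2*u + 2) (2*uu + (2*1)) uu := by
    exact (((hasDerivAt_pow 2 uu).congr_deriv (by push_cast; ring)).add
      ((hasDerivAt_id uu).const_mul 2)).add_const 2
  exact h1.congr_deriv (by ring)

lemma SD_hasDerivAt : HasDerivAt SD (Dfppv/(2*dd)) uu := by
  unfold SD
  have h := (Real.hasDerivAt_sqrt (ne_of_gt (Dfp_pos uupos.le))).comp uu Dfp_hasDerivAt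
  refine h.congr_deriv ?_
  rw [show Real.sqrt (Dfp uu) = dd from rfl]
  ring

lemma Ef_hasDerivAt : HasDerivAt Ef Efd uu := by
  unfold Ef Efd
  have h1 : HasDerivAt (fun u => SD u * dd) (Dfppv/(2*dd) * dd) uu :=
    SD_hasDerivAt.mul_const dd
  have h2 : HasDerivAt (fun u => Nf u * dd + n0 * SD u)
      ((2*uu+2)*dd + n0*(Dfppv/(2*dd))) uu :=
    (Nf_hasDerivAt.mul_const dd).add ((SD_hasDerivAt.const_mul n0).congr_deriv (by ring))
  exact (h1.mul h2).congr_deriv (by ring)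

lemma Wf_hasDerivAt : HasDerivAt Wf wd uu := by
  unfold Wf wd
  exact rf_hasDerivAt.div Ef_hasDerivAt (ne_of_gt (Ef_pos uupos.le))

lemma key_neg : Wf uu + 2*uu*wd < 0 := by
  have hEf : Ef uu = 2*n0*dd^3 := by
    unfold Ef; rw [SD_uu_eq, show Nf uu = n0 from rfl]; ring
  have hddne : dd ≠ 0 := ne_of_gt dd_pos
  have hEfd : Efd = (3/2)*n0*Dfppv*dd + (2*uu+2)*dd^3 := by
    unfold Efd; rw [SD_uu_eq, show Nf uu = n0 from rfl]; field_simp; ring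
  have hRewrite : Wf uu + 2*uu*wd
      = (rf uu * Ef uu + 2*uu*(rfp*Ef uu - rf uu*Efd))/(Ef uu)^2 := by
    have hEfne : Ef uu ≠ 0 := ne_of_gt (Ef_pos uupos.le)
    unfold Wf wd
    field_simp
  rw [hRewrite]
  apply div_neg_of_neg_of_pos
  · have hnum : rf uu * Ef uu + 2*uu*(rfp*Ef uu - rf uu*Efd)
        = dd * (2*rf uu*n0*Dfp uu + 4*uu*rfp*n0*Dfp uu - 3*uu*rf uu*n0*Dfppv
          - 2*uu*(2*uu+2)*rf uu*Dfp uu) := by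
      rw [hEf, hEfd]
      linear_combination (2*rf uu*n0*dd + 4*uu*rfp*n0*dd - 2*uu*(2*uu+2)*rf uu*dd) * dd_sq
    rw [hnum]
    have hT : 2*rf uu*n0*Dfp uu + 4*uu*rfp*n0*Dfp uu - 3*uu*rf uu*n0*Dfppv
        - 2*uu*(2*uu+2)*rf uu*Dfp uu = -32785472 - 12391744*s7 := by
      unfold rf rfp n0 Nf Dfp Dfppv uu
      linear_combination (-4679828 - 1751084*s7 - 627837*s7^2 - 201110*s7^3 - 52312*s7^4
        - 9908*s7^5 - 1183*s7^6 - 66*s7^7) * hs7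
    rw [hT]
    have := s7pos
    nlinarith [dd_pos]
  · exact pow_pos (Ef_pos uupos.le) 2

noncomputable def sqW : ℝ → ℝ := fun u => Real.sqrt (Wf u)
noncomputable def dsW : ℝ → ℝ := deriv sqW

lemma sqW_contDiffOn : ContDiffOn ℝ (⊤ : ℕ∞) sqW GW :=
  fun u hu => (sqrtWf_contDiffAt hu).contDiffWithinAt

lemma dsW_contDiffOn : ContDiffOn ℝ (⊤ : ℕ∞) dsW GW :=
  sqW_contDiffOn.deriv_of_isOpen GW_open (by simp)

lemma sqW_hasDerivAt {u : ℝ} (hu : u ∈ GW) : HasDerivAt sqW (dsW u) u :=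
  (((sqW_contDiffOn u hu).contDiffAt (GW_open.mem_nhds hu)).differentiableAt (by simp)).hasDerivAt

lemma dZ_formula : dZ =ᶠ[𝓝 uu] fun u => sqW u + (u - uu) * dsW u := by
  filter_upwards [GW_open.eventually_mem uu_mem_GW] with u hu
  have h : HasDerivAt Zf (1 * sqW u + (u - uu) * dsW u) u :=
    ((hasDerivAt_id u).sub_const uu).mul (sqW_hasDerivAt hu)
  have := h.deriv
  rw [show dZ u = deriv Zf u from rfl, this]
  ring

lemma dsW_uu : dsW uu = wd / (2*z0) := by
  have h := (Real.hasDerivAt_sqrt (ne_of_gt (Wf_pos uu_mem_GW))).comp uu Wf_hasDerivAt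
  have h2 : HasDerivAt sqW (1/(2*Real.sqrt (Wf uu)) * wd) uu := h
  rw [show dsW uu = deriv sqW uu from rfl, h2.deriv, show Real.sqrt (Wf uu) = z0 from rfl]
  ring

lemma dZ2_uu : dZ2 uu = wd / z0 := by
  have hdiff : DifferentiableAt ℝ dsW uu :=
    ((dsW_contDiffOn uu uu_mem_GW).contDiffAt (GW_open.mem_nhds uu_mem_GW)).differentiableAt (by simp)
  have h : HasDerivAt (fun u => sqW u + (u - uu) * dsW u)
      (dsW uu + (1 * dsW uu + (uu - uu) * deriv dsW uu)) uu := by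
    exact (sqW_hasDerivAt uu_mem_GW).add
      (((hasDerivAt_id uu).sub_const uu).mul hdiff.hasDerivAt)
  rw [show dZ2 uu = deriv dZ uu from rfl, dZ_formula.deriv_eq, h.deriv, dsW_uu]
  field_simp
  ring

noncomputable def k0 : ℝ := 2*z0 + 4*uu*dZ2 uu

lemma k0_neg : k0 < 0 := by
  unfold k0
  rw [dZ2_uu]
  have hz := z0_pos
  have h1 : 2*z0 + 4*uu*(wd/z0) = 2*(z0^2 + 2*uu*wd)/z0 := by field_simp; ring
  rw [h1, z0_sq]
  apply div_neg_of_neg_of_pos _ hz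
  nlinarith [key_neg]

lemma k0_ne : k0 ≠ 0 := ne_of_lt k0_neg

lemma contAt_deriv_of_ev {f : ℝ → ℝ} {x : ℝ} (h : ∀ᶠ y in 𝓝 x, ContDiffAt ℝ (⊤ : ℕ∞) f y) :
    ContinuousAt (deriv f) x := by
  have hU : {y | ContDiffAt ℝ (⊤ : ℕ∞) f y} ∈ 𝓝 x := h
  have hx : x ∈ interior {y | ContDiffAt ℝ (⊤ : ℕ∞) f y} := mem_interior_iff_mem_nhds.mpr hU
  have hCD : ContDiffOn ℝ (⊤ : ℕ∞) f (interior {y | ContDiffAt ℝ (⊤ : ℕ∞) f y}) :=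
    fun y hy => by
      have hmem : y ∈ {y | ContDiffAt ℝ (⊤ : ℕ∞) f y} := interior_subset hy
      rw [mem_setOf_eq] at hmem
      exact hmem.contDiffWithinAt
  exact (hCD.continuousOn_deriv_of_isOpen isOpen_interior (by simp)).continuousAt
    (isOpen_interior.mem_nhds hx)

noncomputable def kapd : ℝ → ℝ := fun x =>
  (dZ (x^2) + x * (dZ2 (x^2) * (2*x)))
  - ((deriv pf x) * dZ (psi (x^2)) + pf x * (dZ2 (psi (x^2)) * (deriv psi (x^2) * (2*x))))

lemma ev_kap_hasDeriv : ∀ᶠ x in 𝓝 gamma0, HasDerivAt kap (kapd x) x := by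
  filter_upwards [ev_x_facts, ev_pf_smooth] with x hx hpf
  obtain ⟨hx1, hx2, hx3, hx4, hx5, hx6, hx7⟩ := hx
  have hsq : HasDerivAt (fun y : ℝ => y^2) (2*x) x := by simpa using hasDerivAt_pow 2 x
  have hdZsq : HasDerivAt (fun y : ℝ => dZ (y^2)) (dZ2 (x^2) * (2*x)) x :=
    HasDerivAt.comp (h₂ := dZ) (h := fun y : ℝ => y^2) x (dZ2_hasDerivAt hx2) hsq
  have h1 : HasDerivAt (fun y : ℝ => y * dZ (y^2)) (1*dZ (x^2) + x*(dZ2 (x^2)*(2*x))) x :=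
    (hasDerivAt_id x).mul hdZsq
  have hpsid : HasDerivAt psi (deriv psi (x^2)) (x^2) :=
    (hx6.differentiableAt (by simp)).hasDerivAt
  have hpsisq : HasDerivAt (fun y : ℝ => psi (y^2)) (deriv psi (x^2) * (2*x)) x :=
    HasDerivAt.comp (h₂ := psi) (h := fun y : ℝ => y^2) x hpsid hsq
  have hdZpsisq : HasDerivAt (fun y : ℝ => dZ (psi (y^2)))
      (dZ2 (psi (x^2)) * (deriv psi (x^2) * (2*x))) x :=
    HasDerivAt.comp (h₂ := dZ) (h := fun y : ℝ => psi (y^2)) x (dZ2_hasDerivAt hx4) hpsisq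
  have hpfd : HasDerivAt pf (deriv pf x) x := (hpf.differentiableAt (by simp)).hasDerivAt
  have h2 := hpfd.mul hdZpsisq
  have h3 := h1.sub h2
  exact h3.congr_deriv (by unfold kapd; ring)

lemma dZ2_contAt : ContinuousAt dZ2 uu :=
  (dZ_contDiffOn.continuousOn_deriv_of_isOpen GW_open (by simp)).continuousAt
    (GW_open.mem_nhds uu_mem_GW)

lemma kapd_contAt : ContinuousAt kapd gamma0 := by
  have csq : ContinuousAt (fun x : ℝ => x^2) gamma0 := by fun_prop
  have c1 : ContinuousAt (fun x : ℝ => dZ (x^2)) gamma0 :=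
    ContinuousAt.comp_of_eq dZ_contAt csq gamma0_sq
  have c2 : ContinuousAt (fun x : ℝ => dZ2 (x^2)) gamma0 :=
    ContinuousAt.comp_of_eq dZ2_contAt csq gamma0_sq
  have c3 : ContinuousAt (fun x : ℝ => psi (x^2)) gamma0 :=
    ContinuousAt.comp_of_eq (g := psi) (f := fun x : ℝ => x^2) psi_contAt csq gamma0_sq
  have hpsival : (fun x : ℝ => psi (x^2)) gamma0 = uu := by
    show psi (gamma0^2) = uu; rw [gamma0_sq, psi_uu]
  have c4 : ContinuousAt (fun x : ℝ => dZ (psi (x^2))) gamma0 :=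
    ContinuousAt.comp_of_eq dZ_contAt c3 hpsival
  have c5 : ContinuousAt (fun x : ℝ => dZ2 (psi (x^2))) gamma0 :=
    ContinuousAt.comp_of_eq dZ2_contAt c3 hpsival
  have c6 : ContinuousAt (fun x : ℝ => deriv psi (x^2)) gamma0 :=
    ContinuousAt.comp_of_eq (contAt_deriv_of_ev ev_psi_smooth) csq gamma0_sq
  have c7 : ContinuousAt (deriv pf) gamma0 := contAt_deriv_of_ev ev_pf_smooth
  exact (c1.add (continuousAt_id.mul (c2.mul (continuousAt_const.mul continuousAt_id)))).sub
    ((c7.mul c4).add (pf_contAt.mul (c5.mul (c6.mul (continuousAt_const.mul continuousAt_id)))))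

lemma kapd_gamma0 : kapd gamma0 = k0 := by
  unfold kapd k0
  rw [gamma0_sq, psi_uu, dZ_uu, pf_gamma0, pf_hasDerivAt.deriv, psi_hasDerivAt.deriv]
  linear_combination (4*dZ2 uu) * gamma0_sq

lemma kap_gamma0 : kap gamma0 = 0 := by
  unfold kap
  rw [gamma0_sq, psi_uu, dZ_uu, pf_gamma0]
  ring

noncomputable def Bzd : ℝ → ℝ := fun x => dZ (x^2) * (2*x)
noncomputable def b0 : ℝ := z0 * (2*gamma0)

lemma b0_pos : 0 < b0 := mul_pos z0_pos (by linarith [gamma0_pos])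

lemma ev_Bz_hasDeriv : ∀ᶠ x in 𝓝 gamma0, HasDerivAt (fun y : ℝ => Zf (y^2)) (Bzd x) x := by
  filter_upwards [ev_x_facts] with x hx
  have hsq : HasDerivAt (fun y : ℝ => y^2) (2*x) x := by simpa using hasDerivAt_pow 2 x
  exact HasDerivAt.comp (h₂ := Zf) (h := fun y : ℝ => y^2) x (dZ_hasDerivAt hx.2.1) hsq

lemma Bzd_contAt : ContinuousAt Bzd gamma0 := by
  have csq : ContinuousAt (fun x : ℝ => x^2) gamma0 := by fun_prop
  have c1 : ContinuousAt (fun x : ℝ => dZ (x^2)) gamma0 :=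
    ContinuousAt.comp_of_eq dZ_contAt csq gamma0_sq
  exact c1.mul (continuousAt_const.mul continuousAt_id)

lemma Bzd_gamma0 : Bzd gamma0 = b0 := by
  unfold Bzd b0
  rw [gamma0_sq, dZ_uu]

lemma Bz_gamma0 : Zf (gamma0^2) = 0 := by rw [gamma0_sq, Zf_uu]

lemma ev_pf_hasDeriv : ∀ᶠ x in 𝓝 gamma0, HasDerivAt (fun y => pf y - gamma0) (deriv pf x) x := by
  filter_upwards [ev_pf_smooth] with x hx
  exact ((hx.differentiableAt (by simp)).hasDerivAt).sub_const gamma0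

lemma mvt_bound {f f' : ℝ → ℝ} {x₀ m : ℝ} (hm : m ≠ 0)
    (hev : ∀ᶠ x in 𝓝 x₀, HasDerivAt f (f' x) x)
    (hct : ContinuousAt f' x₀) (hval : f' x₀ = m) (hz : f x₀ = 0) :
    ∀ᶠ x in 𝓝 x₀, |m|/2 * |x - x₀| ≤ |f x| ∧ |f x| ≤ (3*|m|/2) * |x - x₀| := by
  have hmpos : 0 < |m| := abs_pos.mpr hm
  have h1 : ∀ᶠ y in 𝓝 x₀, |f' y - m| < |m|/2 := by
    have hc : ContinuousAt (fun y => |f' y - m|) x₀ := (hct.sub continuousAt_const).abs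
    have h0 : |f' x₀ - m| < |m|/2 := by rw [hval]; simp; positivity
    exact hc.eventually_lt continuousAt_const h0
  obtain ⟨δ, hδpos, hδ⟩ := Metric.eventually_nhds_iff_ball.mp (h1.and hev)
  rw [Metric.eventually_nhds_iff_ball]
  refine ⟨δ, hδpos, fun x hx => ?_⟩
  rcases eq_or_ne x x₀ with heq | hne
  · subst heq; simp [hz]
  · have key : ∃ c, |f' c - m| < |m|/2 ∧ f x = f' c * (x - x₀) := by
      rw [Real.ball_eq_Ioo] at hδ
      rw [Metric.mem_ball, Real.dist_eq, abs_lt] at hx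
      rcases hne.lt_or_gt with hlt | hgt
      · have hsub : Icc x x₀ ⊆ Ioo (x₀ - δ) (x₀ + δ) := fun y hy =>
          ⟨by linarith [hy.1, hx.1], by linarith [hy.2, hδpos]⟩
        have hcont : ContinuousOn f (Icc x x₀) := fun y hy =>
          ((hδ y (hsub hy)).2.continuousAt).continuousWithinAt
        have hderiv : ∀ y ∈ Ioo x x₀, HasDerivAt f (f' y) y := fun y hy =>
          (hδ y (hsub (Ioo_subset_Icc_self hy))).2
        obtain ⟨c, hc, hceq⟩ := exists_hasDerivAt_eq_slope f f' hlt hcont hderiv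
        refine ⟨c, (hδ c (hsub (Ioo_subset_Icc_self hc))).1, ?_⟩
        rw [hz] at hceq
        have hxne : x₀ - x ≠ 0 := by linarith [hlt]
        field_simp at hceq
        linarith [hceq]
      · have hsub : Icc x₀ x ⊆ Ioo (x₀ - δ) (x₀ + δ) := fun y hy =>
          ⟨by linarith [hy.1, hδpos], by linarith [hy.2, hx.2]⟩
        have hcont : ContinuousOn f (Icc x₀ x) := fun y hy =>
          ((hδ y (hsub hy)).2.continuousAt).continuousWithinAt
        have hderiv : ∀ y ∈ Ioo x₀ x, HasDerivAt f (f' y) y := fun y hy =>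
          (hδ y (hsub (Ioo_subset_Icc_self hy))).2
        obtain ⟨c, hc, hceq⟩ := exists_hasDerivAt_eq_slope f f' hgt hcont hderiv
        refine ⟨c, (hδ c (hsub (Ioo_subset_Icc_self hc))).1, ?_⟩
        rw [hz] at hceq
        have hxne : x - x₀ ≠ 0 := by linarith [hgt]
        field_simp at hceq
        linarith [hceq]
    obtain ⟨c, hc1, hc2⟩ := key
    have hlow : |m|/2 ≤ |f' c| := by
      have := abs_sub_abs_le_abs_sub (f' c) m
      have h2 := abs_sub_comm (f' c) m
      nlinarith [abs_nonneg (f' c), abs_sub_abs_le_abs_sub m (f' c)]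
    have hhigh : |f' c| ≤ 3*|m|/2 := by
      have := abs_sub_abs_le_abs_sub (f' c) m
      nlinarith
    rw [hc2, abs_mul]
    constructor
    · exact mul_le_mul_of_nonneg_right hlow (abs_nonneg _)
    · exact mul_le_mul_of_nonneg_right hhigh (abs_nonneg _)

theorem stmt_12 : ∃ δ₀ : ℝ, 0 < δ₀ ∧ ∃ pf : ℝ → ℝ, ∃ c C : ℝ, 0 < c ∧ c ≤ C ∧
    ContDiffOn ℝ (⊤ : ℕ∞) pf (Set.Ioo (gamma0 - δ₀) (gamma0 + δ₀)) ∧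
    pf gamma0 = gamma0 ∧ deriv pf gamma0 = -1 ∧
    (∀ x ∈ Set.Ioo (gamma0 - δ₀) (gamma0 + δ₀), deriv lam (pf x) = deriv lam x) ∧
    ∀ x ∈ Set.Ioo (gamma0 - δ₀) (gamma0 + δ₀),
      (c * |x - gamma0| ≤ |pf x - gamma0| ∧ |pf x - gamma0| ≤ C * |x - gamma0|) ∧
      (c * |x - gamma0| ^ 2 ≤ |iteratedDeriv 2 lam x + iteratedDeriv 2 lam (pf x)| ∧
        |iteratedDeriv 2 lam x + iteratedDeriv 2 lam (pf x)| ≤ C * |x - gamma0| ^ 2) := by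
  have hk := abs_pos.mpr k0_ne
  have hb := b0_pos
  have mvt_pf := mvt_bound (f := fun y => pf y - gamma0) (f' := deriv pf) (m := -1)
    (by norm_num) ev_pf_hasDeriv (contAt_deriv_of_ev ev_pf_smooth) pf_hasDerivAt.deriv
    (by show pf gamma0 - gamma0 = 0; rw [pf_gamma0]; ring)
  have mvt_Bz := mvt_bound (f := fun y : ℝ => Zf (y^2)) (f' := Bzd) (m := b0)
    (ne_of_gt hb) ev_Bz_hasDeriv Bzd_contAt Bzd_gamma0 Bz_gamma0
  have mvt_kap := mvt_bound (f := kap) (f' := kapd) (m := k0)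
    k0_ne ev_kap_hasDeriv kapd_contAt kapd_gamma0 kap_gamma0
  have hall := (((mvt_pf.and mvt_Bz).and mvt_kap).and
    (ev_H_eq.and (ev_deriv_lam_flip.and ev_pf_smooth)))
  obtain ⟨δ₀, hδpos, hδ⟩ := Metric.eventually_nhds_iff_ball.mp hall
  refine ⟨δ₀, hδpos, pf, min (1/4) (b0*|k0|), max (3/2) (9*b0*|k0|),
    ?_, ?_, ?_, pf_gamma0, pf_hasDerivAt.deriv, ?_, ?_⟩
  · apply lt_min
    · norm_num
    · positivity
  · calc min (1/4 : ℝ) (b0*|k0|) ≤ 1/4 := min_le_left _ _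
      _ ≤ 3/2 := by norm_num
      _ ≤ _ := le_max_left _ _
  · intro x hx
    rw [← Real.ball_eq_Ioo] at hx
    exact ((hδ x hx).2.2.2.contDiffWithinAt)
  · intro x hx
    rw [← Real.ball_eq_Ioo] at hx
    exact (hδ x hx).2.2.1
  · intro x hx
    rw [← Real.ball_eq_Ioo] at hx
    obtain ⟨⟨⟨hpf, hBz⟩, hkap⟩, hH, _, _⟩ := hδ x hx
    have habs : (0:ℝ) ≤ |x - gamma0| := abs_nonneg _
    simp only [abs_neg, abs_one] at hpf
    obtain ⟨hB1, hB2⟩ := hBz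
    rw [abs_of_pos hb] at hB1 hB2
    obtain ⟨hK1, hK2⟩ := hkap
    have hZge : (0:ℝ) ≤ |Zf (x^2)| := abs_nonneg _
    have hKge : (0:ℝ) ≤ |kap x| := abs_nonneg _
    constructor
    · constructor
      · calc min (1/4 : ℝ) (b0*|k0|) * |x - gamma0| ≤ 1/4 * |x - gamma0| :=
            mul_le_mul_of_nonneg_right (min_le_left _ _) habs
          _ ≤ 1/2 * |x - gamma0| := by nlinarith
          _ ≤ |pf x - gamma0| := by
            have := hpf.1
            linarith [this]
      · calc |pf x - gamma0| ≤ 3*1/2 * |x - gamma0| := hpf.2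
          _ ≤ 3/2 * |x - gamma0| := by nlinarith
          _ ≤ max (3/2 : ℝ) (9*b0*|k0|) * |x - gamma0| :=
            mul_le_mul_of_nonneg_right (le_max_left _ _) habs
    · rw [hH]
      have e1 : |4 * Zf (x^2) * kap x| = 4 * |Zf (x^2)| * |kap x| := by
        rw [abs_mul, abs_mul]
        norm_num
      rw [e1]
      have hmain_low : b0*|k0| * |x - gamma0|^2 ≤ 4 * |Zf (x^2)| * |kap x| := by
        have h1 : b0/2 * |x - gamma0| ≤ |Zf (x^2)| := hB1
        have h2 : |k0|/2 * |x - gamma0| ≤ |kap x| := hK1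
        nlinarith [mul_le_mul h1 h2 (by positivity) hZge]
      have hmain_high : 4 * |Zf (x^2)| * |kap x| ≤ 9*b0*|k0| * |x - gamma0|^2 := by
        have h1 : |Zf (x^2)| ≤ 3*b0/2 * |x - gamma0| := hB2
        have h2 : |kap x| ≤ 3*|k0|/2 * |x - gamma0| := hK2
        nlinarith [mul_le_mul h1 h2 hKge (by positivity : (0:ℝ) ≤ 3*b0/2 * |x - gamma0|)]
      constructor
      · calc min (1/4 : ℝ) (b0*|k0|) * |x - gamma0|^2 ≤ b0*|k0| * |x - gamma0|^2 :=
            mul_le_mul_of_nonneg_right (min_le_right _ _) (by positivity)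
          _ ≤ _ := hmain_low
      · calc 4 * |Zf (x^2)| * |kap x| ≤ 9*b0*|k0| * |x - gamma0|^2 := hmain_high
          _ ≤ max (3/2 : ℝ) (9*b0*|k0|) * |x - gamma0|^2 :=
            mul_le_mul_of_nonneg_right (le_max_right _ _) (by positivity)
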